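/- arXiv:1812.00191 — 5 statements merged into one kernel-verified Lean document; each statement's English description precedes it below -/
import Mathlib

section
/- For all β > 0 and γ > 0, the integral identity ∫₀^∞ (1/x)·exp(−β/x − γx) dx = 2·K₀(2√(βγ)) holds, where K₀(z) = ∫₀^∞ exp(−z·cosh t) dt. -/
open Real MeasureTheory

/-- The modified Bessel function of the second kind of order 0,
`K₀(z) = ∫₀^∞ exp(−z·cosh t) dt`. -/
noncomputable def besselK0 (z : ℝ) : ℝ :=
  ∫ t in Set.Ioi (0 : ℝ), Real.exp (-z * Real.cosh t)

/-! The substitution `x = √(β/γ) eᵗ` turns `dx / x` into `dt` and `β / x + γ x` into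
`2 √(βγ) cosh t`; the resulting integral over `ℝ` is twice the one over `(0, ∞)` since
`cosh` is even. -/

section ChangeOfVariables

variable {E : Type*} [NormedAddCommGroup E] [NormedSpace ℝ E]

theorem integral_Ioi_inv_smul_eq_integral_comp_exp (g : ℝ → E) :
    ∫ x in Set.Ioi 0, x⁻¹ • g x = ∫ t, g (exp t) := by
  rw [← range_exp, ← Set.image_univ,
    integral_image_eq_integral_abs_deriv_smul MeasurableSet.univ
      (fun t _ ↦ (hasDerivAt_exp t).hasDerivWithinAt) exp_injective.injOn, setIntegral_univ]
  refine integral_congr_ae (Filter.Eventually.of_forall fun t ↦ ?_)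
  simp only [abs_of_pos (exp_pos t), smul_smul, mul_inv_cancel₀ (exp_pos t).ne', one_smul]

theorem integral_Ioi_inv_smul_eq_integral_comp_mul_exp (g : ℝ → E) {a : ℝ} (ha : 0 < a) :
    ∫ x in Set.Ioi 0, x⁻¹ • g x = ∫ t, g (a * exp t) := by
  have hshift : ∀ t, a * exp t = exp (t + log a) := fun t ↦ by rw [exp_add, exp_log ha, mul_comm]
  simp_rw [integral_Ioi_inv_smul_eq_integral_comp_exp, hshift]
  exact (integral_add_right_eq_self (fun t ↦ g (exp t)) (log a)).symm

end ChangeOfVariables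

theorem div_add_mul_eq_two_sqrt_mul_mul_cosh {β γ : ℝ} (hβ : 0 < β) (hγ : 0 < γ) (t : ℝ) :
    β / (√(β / γ) * exp t) + γ * (√(β / γ) * exp t) = 2 * √(β * γ) * cosh t := by
  have hβc : β / √(β / γ) = √(β * γ) := by
    rw [sqrt_div' _ hγ.le, div_div_eq_mul_div, sqrt_mul hβ.le, mul_div_right_comm, div_sqrt]
  have hγc : γ * √(β / γ) = √(β * γ) := by
    rw [sqrt_div' _ hγ.le, mul_div_left_comm, div_sqrt, sqrt_mul hβ.le, mul_comm]
  rw [cosh_eq, ← div_div, hβc, ← mul_assoc, hγc, div_eq_mul_inv, ← exp_neg]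
  ring

theorem integral_exp_neg_mul_cosh (z : ℝ) :
    ∫ t, exp (-z * cosh t) = 2 * besselK0 z := by
  rw [besselK0]
  simpa only [cosh_abs] using integral_comp_abs (f := fun t ↦ exp (-z * cosh t))

/-- For all `β > 0` and `γ > 0`,
`∫₀^∞ (1/x)·exp(−β/x − γx) dx = 2·K₀(2√(βγ))`. -/
theorem integral_inv_mul_exp_eq_besselK0 (β γ : ℝ) (hβ : 0 < β) (hγ : 0 < γ) :
    ∫ x in Set.Ioi (0 : ℝ), (1 / x) * Real.exp (-β / x - γ * x) =
      2 * besselK0 (2 * Real.sqrt (β * γ)) := by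
  have hc : 0 < √(β / γ) := sqrt_pos.2 (div_pos hβ hγ)
  calc ∫ x in Set.Ioi (0 : ℝ), (1 / x) * exp (-β / x - γ * x)
      = ∫ t, exp (-(β / (√(β / γ) * exp t) + γ * (√(β / γ) * exp t))) := by
        simp_rw [one_div, ← smul_eq_mul, neg_div, ← neg_add']
        exact integral_Ioi_inv_smul_eq_integral_comp_mul_exp _ hc
    _ = ∫ t, exp (-(2 * √(β * γ)) * cosh t) := by
        simp_rw [div_add_mul_eq_two_sqrt_mul_mul_cosh hβ hγ, neg_mul]
    _ = 2 * besselK0 (2 * √(β * γ)) := integral_exp_neg_mul_cosh _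
end

section
/- For all β > 0 and γ > 0, the integral identity ∫₀^∞ exp(−β/x − γx) dx = 2·√(β/γ)·K₁(2√(βγ)) holds, where K₁(z) = ∫₀^∞ exp(−z·cosh t)·cosh t dt. -/
/-!
Substituting `x = c eᵗ` with `c = √(β/γ)` turns `-β/x - γx` into `-z cosh t` with
`z = 2√(βγ)`, and the Jacobian is `c eᵗ`. Since `exp (-z cosh t)` is even, `eᵗ` may be replaced by
`cosh t`, and the resulting integral over `ℝ` is twice the one over `(0, ∞)` defining `K₁(z)`.
-/

open Real MeasureTheory

/-- The modified Bessel function of the second kind of order 1,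
`K₁(z) = ∫₀^∞ exp(−z·cosh t)·cosh t dt`. -/
noncomputable def besselK1 (z : ℝ) : ℝ :=
  ∫ t in Set.Ioi (0 : ℝ), Real.exp (-z * Real.cosh t) * Real.cosh t

open Set

section ExpSubstitution

variable {E : Type*} [NormedAddCommGroup E] [NormedSpace ℝ E] {c : ℝ}

lemma image_univ_const_mul_exp (hc : 0 < c) : (fun t => c * exp t) '' univ = Ioi 0 := by
  refine Subset.antisymm (by rintro _ ⟨t, -, rfl⟩; exact mul_pos hc (exp_pos t)) fun x hx => ?_
  refine ⟨log (x / c), trivial, ?_⟩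
  change c * exp (log (x / c)) = x
  rw [exp_log (div_pos hx hc), mul_div_cancel₀ x hc.ne']

lemma hasDerivWithinAt_const_mul_exp (c t : ℝ) :
    HasDerivWithinAt (fun t => c * exp t) (c * exp t) univ t :=
  ((hasDerivAt_exp t).const_mul c).hasDerivWithinAt

lemma injOn_const_mul_exp (hc : 0 < c) : InjOn (fun t => c * exp t) univ :=
  fun _ _ _ _ h => exp_injective (mul_left_cancel₀ hc.ne' h)

lemma integrableOn_Ioi_iff_integrable_const_mul_exp (hc : 0 < c) (f : ℝ → E) :
    IntegrableOn f (Ioi 0) ↔ Integrable fun t => (c * exp t) • f (c * exp t) := by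
  rw [← image_univ_const_mul_exp hc, integrableOn_image_iff_integrableOn_abs_deriv_smul
    MeasurableSet.univ (fun t _ => hasDerivWithinAt_const_mul_exp c t) (injOn_const_mul_exp hc),
    integrableOn_univ]
  simp_rw [abs_of_pos (mul_pos hc (exp_pos _))]

lemma integral_Ioi_eq_integral_const_mul_exp (hc : 0 < c) (f : ℝ → E) :
    ∫ x in Ioi 0, f x = ∫ t, (c * exp t) • f (c * exp t) := by
  rw [← image_univ_const_mul_exp hc, integral_image_eq_integral_abs_deriv_smul
    MeasurableSet.univ (fun t _ => hasDerivWithinAt_const_mul_exp c t) (injOn_const_mul_exp hc),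
    setIntegral_univ]
  simp_rw [abs_of_pos (mul_pos hc (exp_pos _))]

end ExpSubstitution

lemma integral_mul_exp_eq_integral_mul_cosh {g : ℝ → ℝ} (hg : ∀ t, g (-t) = g t)
    (hint : Integrable fun t => g t * exp t) :
    ∫ t, g t * exp t = ∫ t, g t * cosh t := by
  have hint' : Integrable fun t => g t * exp (-t) := by
    simpa only [hg] using hint.comp_neg
  have hrefl : ∫ t, g t * exp (-t) = ∫ t, g t * exp t := by
    simpa only [hg, neg_neg] using integral_neg_eq_self (fun t => g t * exp t) volume
  have hsum : 2 * ∫ t, g t * cosh t = (∫ t, g t * exp t) + ∫ t, g t * exp (-t) := by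
    rw [← integral_const_mul, ← integral_add hint hint']
    congr 1 with t
    rw [cosh_eq]
    ring
  linarith

lemma integrableOn_exp_neg_div_sub_mul {β γ : ℝ} (hβ : 0 ≤ β) (hγ : 0 < γ) :
    IntegrableOn (fun x => exp (-β / x - γ * x)) (Ioi 0) := by
  refine (exp_neg_integrableOn_Ioi 0 hγ).mono' (by fun_prop) ?_
  filter_upwards [ae_restrict_mem measurableSet_Ioi] with x hx
  rw [norm_of_nonneg (exp_pos _).le, exp_le_exp, neg_mul, neg_div]
  linarith [div_nonneg hβ (le_of_lt hx)]

lemma neg_div_sub_mul_eq_neg_mul_cosh {β γ : ℝ} (hβ : 0 < β) (hγ : 0 < γ) (t : ℝ) :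
    -β / (√(β / γ) * exp t) - γ * (√(β / γ) * exp t) = -(2 * √(β * γ)) * cosh t := by
  have hβ_eq : √(β / γ) * √(β * γ) = β := by
    rw [← sqrt_mul (div_pos hβ hγ).le, show β / γ * (β * γ) = β ^ 2 by field_simp, sqrt_sq hβ.le]
  have hγ_eq : γ * √(β / γ) = √(β * γ) := by
    rw [← sqrt_sq hγ.le, ← sqrt_mul (sq_nonneg γ), sqrt_sq hγ.le]
    congr 1
    field_simp
  rw [cosh_eq, exp_neg]
  field_simp
  linear_combination hβ_eq - exp t ^ 2 * √(β / γ) * hγ_eq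

/-- For all `β > 0` and `γ > 0`,
`∫₀^∞ exp(−β/x − γx) dx = 2·√(β/γ)·K₁(2√(βγ))`. -/
theorem integral_exp_eq_besselK1 (β γ : ℝ) (hβ : 0 < β) (hγ : 0 < γ) :
    ∫ x in Set.Ioi (0 : ℝ), Real.exp (-β / x - γ * x) =
      2 * Real.sqrt (β / γ) * besselK1 (2 * Real.sqrt (β * γ)) := by
  set c := √(β / γ)
  set z := 2 * √(β * γ)
  have hc : 0 < c := sqrt_pos.2 (div_pos hβ hγ)
  have hsubst : ∀ t, (c * exp t) • exp (-β / (c * exp t) - γ * (c * exp t))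
      = c * (exp (-z * cosh t) * exp t) := fun t => by
    rw [smul_eq_mul, neg_div_sub_mul_eq_neg_mul_cosh hβ hγ]
    ring
  have hint : Integrable fun t => exp (-z * cosh t) * exp t := by
    have := (integrableOn_Ioi_iff_integrable_const_mul_exp hc _).1
      (integrableOn_exp_neg_div_sub_mul hβ.le hγ)
    simp_rw [hsubst] at this
    exact (integrable_const_mul_iff (isUnit_iff_ne_zero.2 hc.ne') _).1 this
  calc ∫ x in Ioi 0, exp (-β / x - γ * x)
      = c * ∫ t, exp (-z * cosh t) * exp t := by
        simp_rw [integral_Ioi_eq_integral_const_mul_exp hc, hsubst, integral_const_mul]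
    _ = c * ∫ t, exp (-z * cosh |t|) * cosh |t| := by
        simp_rw [integral_mul_exp_eq_integral_mul_cosh (fun t => by rw [cosh_neg]) hint, cosh_abs]
    _ = 2 * c * besselK1 z := by
        rw [integral_comp_abs (f := fun t => exp (-z * cosh t) * cosh t), besselK1]
        ring
end

section
/- For all q > 0, k > 0, D > 0 and R₀ > 0, the integral identity ∫₀^∞ q·exp(−kτ)·(1 − exp(−R₀²/(4Dτ))) dτ = (q/k)·(1 − √(k/D)·R₀·K₁(√(k/D)·R₀)) holds, where K₁(z) = ∫₀^∞ exp(−z·cosh t)·cosh t dt. -/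
open Real MeasureTheory Set

/-!
Splitting `1 - exp(-R₀²/(4Dτ))` leaves the elementary integral `∫₀^∞ q e^{-kτ} = q/k` and the
Laplace-type integral `∫₀^∞ exp(-kτ - z²/(4kτ)) dτ` with `z = √(k/D)·R₀`. The scaling
`τ = (z/2k)·u` turns its exponent into `-(z/2)(u + 1/u)`, and the substitution `u = eᵗ` turns
that into `-z cosh t` over the whole line; folding `t ↦ -t` onto `(0, ∞)` produces the weight
`eᵗ + e⁻ᵗ = 2 cosh t` of `K₁`.
-/

section

variable {E : Type*} [NormedAddCommGroup E] [NormedSpace ℝ E]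

theorem integral_comp_exp (g : ℝ → E) :
    ∫ x, exp x • g (exp x) = ∫ y in Ioi 0, g y := by
  rw [← range_exp, ← image_univ]
  simpa [abs_of_pos (exp_pos _)] using (integral_image_eq_integral_abs_deriv_smul
    MeasurableSet.univ (fun x _ ↦ (hasDerivAt_exp x).hasDerivWithinAt)
    (fun x _ y _ hxy ↦ exp_injective hxy) g).symm

theorem integrable_comp_exp_iff (g : ℝ → E) :
    Integrable (fun x ↦ exp x • g (exp x)) ↔ IntegrableOn g (Ioi 0) := by
  rw [← range_exp, ← image_univ]
  simpa [abs_of_pos (exp_pos _)] using (integrableOn_image_iff_integrableOn_abs_deriv_smul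
    MeasurableSet.univ (fun x _ ↦ (hasDerivAt_exp x).hasDerivWithinAt)
    (fun x _ y _ hxy ↦ exp_injective hxy) g).symm

theorem integral_eq_integral_Ioi_add_comp_neg {g : ℝ → E} (hg : Integrable g) :
    ∫ x, g x = ∫ x in Ioi 0, (g x + g (-x)) := by
  rw [integral_add hg.integrableOn hg.comp_neg.integrableOn, integral_comp_neg_Ioi, neg_zero,
    add_comm, intervalIntegral.integral_Iic_add_Ioi hg.integrableOn hg.integrableOn]

end

theorem integrableOn_exp_neg_mul_sub_div {k a : ℝ} (hk : 0 < k) (ha : 0 ≤ a) :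
    IntegrableOn (fun τ ↦ exp (-k * τ - a / τ)) (Ioi 0) := by
  refine (integrableOn_exp_mul_Ioi (neg_neg_of_pos hk) 0).mono' (by fun_prop) ?_
  filter_upwards [ae_restrict_mem measurableSet_Ioi] with τ (hτ : 0 < τ)
  rw [norm_of_nonneg (exp_pos _).le, exp_le_exp]
  linarith [div_nonneg ha hτ.le]

theorem integral_exp_neg_mul_sub_div_eq_besselK1 {z : ℝ} (hz : 0 < z) :
    ∫ u in Ioi 0, exp (-(z / 2) * u - z / 2 / u) = 2 * besselK1 z := by
  have hsubst : ∀ t, exp t • exp (-(z / 2) * exp t - z / 2 / exp t) = exp t * exp (-z * cosh t) :=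
    fun t ↦ by rw [smul_eq_mul, cosh_eq, exp_neg]; ring_nf
  have hint : Integrable fun t ↦ exp t * exp (-z * cosh t) := by
    simpa only [hsubst] using (integrable_comp_exp_iff _).2
      (integrableOn_exp_neg_mul_sub_div (half_pos hz) (half_pos hz).le)
  rw [← integral_comp_exp]
  simp_rw [hsubst]
  rw [integral_eq_integral_Ioi_add_comp_neg hint, besselK1, ← integral_const_mul]
  congr 1 with t
  rw [cosh_neg, cosh_eq]
  ring

theorem integral_exp_neg_mul_sub_sq_div {k z : ℝ} (hk : 0 < k) (hz : 0 < z) :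
    ∫ τ in Ioi 0, exp (-k * τ - z ^ 2 / (4 * k) / τ) = z / k * besselK1 z := by
  have hc : 0 < z / (2 * k) := by positivity
  have hscale := integral_comp_mul_left_Ioi' (fun τ ↦ exp (-k * τ - z ^ 2 / (4 * k) / τ)) 0 hc
  have hexponent : ∀ u, -k * (z / (2 * k) * u) - z ^ 2 / (4 * k) / (z / (2 * k) * u) =
      -(z / 2) * u - z / 2 / u := fun u ↦ by field_simp; ring
  rw [mul_zero] at hscale
  simp_rw [← hscale, hexponent]
  rw [integral_exp_neg_mul_sub_div_eq_besselK1 hz, smul_eq_mul]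
  field_simp

theorem time_integral_eq_self_response_general (q k D R₀ : ℝ)
    (hk : 0 < k) (hD : 0 < D) (hR₀ : 0 < R₀) :
    ∫ τ in Set.Ioi (0 : ℝ), q * Real.exp (-k * τ) * (1 - Real.exp (-R₀ ^ 2 / (4 * D * τ))) =
      (q / k) * (1 - Real.sqrt (k / D) * R₀ * besselK1 (Real.sqrt (k / D) * R₀)) := by
  set z := Real.sqrt (k / D) * R₀
  have hz : 0 < z := by positivity
  have hsplit : ∀ τ, q * exp (-k * τ) * (1 - exp (-R₀ ^ 2 / (4 * D * τ))) =
      q * exp (-k * τ) - q * exp (-k * τ - z ^ 2 / (4 * k) / τ) := fun τ ↦ by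
    rw [mul_pow, sq_sqrt (by positivity), sub_eq_add_neg (-k * τ), exp_add]
    field_simp
  simp_rw [hsplit]
  rw [integral_sub ((integrableOn_exp_mul_Ioi (neg_neg_of_pos hk) 0).const_mul q)
      ((integrableOn_exp_neg_mul_sub_div hk (by positivity)).const_mul q),
    integral_const_mul, integral_const_mul, integral_exp_mul_Ioi (neg_neg_of_pos hk),
    integral_exp_neg_mul_sub_sq_div hk hz, mul_zero, exp_zero]
  field_simp

/-- For all `q > 0`, `k > 0`, `D > 0` and `R₀ > 0`,
`∫₀^∞ q·exp(−kτ)·(1 − exp(−R₀²/(4Dτ))) dτ = (q/k)·(1 − √(k/D)·R₀·K₁(√(k/D)·R₀))`. -/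
theorem time_integral_eq_self_response (q k D R₀ : ℝ)
    (hq : 0 < q) (hk : 0 < k) (hD : 0 < D) (hR₀ : 0 < R₀) :
    ∫ τ in Set.Ioi (0 : ℝ), q * Real.exp (-k * τ) * (1 - Real.exp (-R₀ ^ 2 / (4 * D * τ))) =
      (q / k) * (1 - Real.sqrt (k / D) * R₀ * besselK1 (Real.sqrt (k / D) * R₀)) :=
  time_integral_eq_self_response_general q k D R₀ hk hD hR₀
end

section
/- Let q > 0, k > 0, D > 0 and R₀ > 0. The asymptotic channel response at a circular receiver of radius R₀, due to continuous emission at rate q from a point transmitter located at the center of this receiver since time 0, is ∫₀^∞ ∫_{{y ∈ ℝ² : |y| ≤ R₀}} q·C(y, τ) dy dτ = (q/k)·(1 − √(k/D)·R₀·K₁(√(k/D)·R₀)), where C(y, τ) = (1/(4πDτ))·exp(−|y|²/(4Dτ) − kτ) and K₁(z) = ∫₀^∞ exp(−z·cosh t)·cosh t dt. -/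
open Real MeasureTheory

/-- The 2D reaction–diffusion heat kernel
`C(r, τ) = (1/(4πDτ))·exp(−|r|²/(4Dτ) − kτ)` for `r ∈ ℝ²`. -/
noncomputable def heatKernel2D (D k : ℝ) (r : EuclideanSpace ℝ (Fin 2)) (τ : ℝ) : ℝ :=
  (1 / (4 * π * D * τ)) * Real.exp (-‖r‖ ^ 2 / (4 * D * τ) - k * τ)

open Set

/-! In polar coordinates the Gaussian factor of the kernel integrates over the disk to
`e^{-kτ} (1 - e^{-R₀²/(4Dτ)})`. The first term integrates in time to `1/k`. In the second, with
`z = √(k/D) R₀` the exponent is `kτ + z²/(4kτ)`, and the substitution `τ = (z/2k) eᵘ` turns it into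
`z cosh u`; since `cosh` is even, the resulting integral of `eᵘ e^{-z cosh u}` over `ℝ` equals twice
that of `cosh u e^{-z cosh u}` over `(0, ∞)`, which gives `(z/k) K₁(z)`. -/

theorem integral_fun_norm_euclideanSpace_fin_two (f : ℝ → ℝ) :
    ∫ y : EuclideanSpace ℝ (Fin 2), f ‖y‖ = 2 * π * ∫ r in Ioi (0 : ℝ), r * f r := by
  rw [integral_fun_norm_addHaar volume f, finrank_euclideanSpace_fin, measureReal_def,
    EuclideanSpace.volume_ball_fin_two]
  simp only [ENNReal.ofReal_one, one_pow, one_mul, ENNReal.toReal_ofReal pi_nonneg,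
    Nat.add_one_sub_one, pow_one, smul_eq_mul, nsmul_eq_mul, Nat.cast_ofNat]
  ring

theorem intervalIntegral_mul_exp_neg_sq_div {a : ℝ} (ha : a ≠ 0) (R : ℝ) :
    ∫ r in (0 : ℝ)..R, r * exp (-r ^ 2 / a) = a / 2 * (1 - exp (-R ^ 2 / a)) := by
  have hderiv : ∀ r ∈ uIcc 0 R,
      HasDerivAt (fun r => -(a / 2) * exp (-r ^ 2 / a)) (r * exp (-r ^ 2 / a)) r := by
    intro r _
    refine ((((hasDerivAt_pow 2 r).neg.div_const a).exp).const_mul (-(a / 2))).congr_deriv ?_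
    simp only [Pi.neg_apply, Nat.cast_ofNat, Nat.add_one_sub_one, pow_one]
    field_simp
  rw [intervalIntegral.integral_eq_sub_of_hasDerivAt hderiv
    (Continuous.intervalIntegrable (by fun_prop) _ _)]
  rw [zero_pow two_ne_zero, neg_zero, zero_div, exp_zero]
  ring

theorem integral_closedBall_exp_neg_norm_sq_div {a R : ℝ} (ha : a ≠ 0) (hR : 0 ≤ R) :
    ∫ y in Metric.closedBall (0 : EuclideanSpace ℝ (Fin 2)) R, exp (-‖y‖ ^ 2 / a) =
      π * a * (1 - exp (-R ^ 2 / a)) := by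
  have hradial := integral_fun_norm_euclideanSpace_fin_two
    ((Iic R).indicator fun r => exp (-r ^ 2 / a))
  have hball : ∀ y : EuclideanSpace ℝ (Fin 2),
      (Metric.closedBall 0 R).indicator (fun y => exp (-‖y‖ ^ 2 / a)) y =
        (Iic R).indicator (fun r => exp (-r ^ 2 / a)) ‖y‖ := by
    intro y
    simp only [indicator, mem_closedBall_zero_iff, mem_Iic]
  rw [← integral_indicator Metric.isClosed_closedBall.measurableSet]
  simp only [hball, hradial, ← indicator_mul_right _ (fun r : ℝ => r)]
  rw [setIntegral_indicator measurableSet_Iic, Ioi_inter_Iic,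
    ← intervalIntegral.integral_of_le hR, intervalIntegral_mul_exp_neg_sq_div ha]
  ring

theorem integral_closedBall_heatKernel2D {D k τ R : ℝ} (hD : D ≠ 0) (hτ : τ ≠ 0) (hR : 0 ≤ R) :
    ∫ y in Metric.closedBall 0 R, heatKernel2D D k y τ =
      exp (-k * τ) * (1 - exp (-R ^ 2 / (4 * D * τ))) := by
  have hsplit : ∀ y : EuclideanSpace ℝ (Fin 2), heatKernel2D D k y τ =
      exp (-k * τ) / (4 * π * D * τ) * exp (-‖y‖ ^ 2 / (4 * D * τ)) := by
    intro y
    rw [heatKernel2D, sub_eq_add_neg, exp_add, neg_mul]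
    ring
  simp only [hsplit]
  rw [integral_const_mul, integral_closedBall_exp_neg_norm_sq_div (by positivity) hR]
  field_simp

theorem integrableOn_exp_neg_mul_sub_sq_div_Ioi {k : ℝ} (hk : 0 < k) (z : ℝ) :
    IntegrableOn (fun τ => exp (-k * τ - z ^ 2 / (4 * k * τ))) (Ioi 0) := by
  refine (integrableOn_exp_mul_Ioi (neg_neg_of_pos hk) 0).mono' (by fun_prop) ?_
  filter_upwards [ae_restrict_mem measurableSet_Ioi] with τ hτ
  rw [norm_of_nonneg (exp_pos _).le, exp_le_exp]
  have : 0 ≤ z ^ 2 / (4 * k * τ) := by have := mem_Ioi.mp hτ; positivity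
  linarith

theorem integral_exp_mul_eq_two_mul_setIntegral_cosh_mul {w : ℝ → ℝ} (hw : ∀ u, w (-u) = w u)
    (hint : Integrable fun u => exp u * w u) :
    ∫ u, exp u * w u = 2 * ∫ u in Ioi 0, cosh u * w u := by
  have hreflect : ∫ u, exp (-u) * w u = ∫ u, exp u * w u := by
    simpa only [hw] using integral_neg_eq_self (fun u => exp u * w u) volume
  have hint_neg : Integrable fun u => exp (-u) * w u := by
    simpa only [hw] using hint.comp_neg
  have habs : ∀ u, cosh u * w u = cosh |u| * w |u| := by
    intro u
    rcases abs_choice u with h | h <;> rw [h]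
    rw [cosh_neg, hw]
  calc ∫ u, exp u * w u = ((∫ u, exp u * w u) + ∫ u, exp (-u) * w u) / 2 := by
        rw [hreflect]; ring
    _ = ∫ u, cosh u * w u := by
        rw [← integral_add hint hint_neg, ← integral_div]
        congr 1; ext u
        rw [cosh_eq]; ring
    _ = 2 * ∫ u in Ioi 0, cosh u * w u := by
        rw [← integral_comp_abs (f := fun u => cosh u * w u)]
        exact integral_congr_ae (.of_forall habs)

theorem integral_exp_neg_mul_sub_sq_div_Ioi {k z : ℝ} (hk : 0 < k) (hz : 0 < z) :
    ∫ τ in Ioi 0, exp (-k * τ - z ^ 2 / (4 * k * τ)) = z / k * besselK1 z := by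
  set c := z / (2 * k) with hc_def
  have hc : 0 < c := by positivity
  set φ : ℝ → ℝ := fun u => c * exp u
  have hφ_deriv : ∀ u ∈ univ, HasDerivWithinAt φ (c * exp u) univ u :=
    fun u _ => ((hasDerivAt_exp u).const_mul c).hasDerivWithinAt
  have hφ_inj : InjOn φ univ :=
    ((mul_right_injective₀ hc.ne').comp exp_injective).injOn
  have hφ_image : φ '' univ = Ioi 0 := by
    rw [image_univ, show φ = (c * ·) ∘ exp from rfl, range_comp, range_exp,
      image_mul_left_Ioi hc, mul_zero]
  have hφ_exponent : ∀ u, -k * φ u - z ^ 2 / (4 * k * φ u) = -z * cosh u := by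
    intro u
    simp only [φ, cosh_eq, exp_neg, hc_def]
    field_simp
    ring
  set F : ℝ → ℝ := fun τ => exp (-k * τ - z ^ 2 / (4 * k * τ))
  have hpullback : ∀ u, |c * exp u| • F (φ u) = c * (exp u * exp (-z * cosh u)) := by
    intro u
    rw [abs_of_pos (by positivity), smul_eq_mul, ← hφ_exponent]
    ring
  have hF_int : IntegrableOn F (φ '' univ) := by
    rw [hφ_image]
    exact integrableOn_exp_neg_mul_sub_sq_div_Ioi hk z
  have hint : Integrable fun u => exp u * exp (-z * cosh u) := by
    have := (integrableOn_image_iff_integrableOn_abs_deriv_smul MeasurableSet.univ hφ_deriv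
      hφ_inj F).mp hF_int
    simp only [hpullback, integrableOn_univ] at this
    exact (this.const_mul c⁻¹).congr (.of_forall fun u => by field_simp)
  calc ∫ τ in Ioi 0, F τ = c * ∫ u, exp u * exp (-z * cosh u) := by
        rw [← hφ_image, integral_image_eq_integral_abs_deriv_smul MeasurableSet.univ hφ_deriv
          hφ_inj, Measure.restrict_univ]
        simp only [hpullback, integral_const_mul]
    _ = z / k * besselK1 z := by
        rw [integral_exp_mul_eq_two_mul_setIntegral_cosh_mul (fun u => by rw [cosh_neg]) hint,
          besselK1]
        simp only [mul_comm (cosh _)]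
        rw [hc_def]
        field_simp

theorem self_asymptotic_channel_response_general (q k D R₀ : ℝ)
    (hk : 0 < k) (hD : 0 < D) (hR₀ : 0 < R₀) :
    ∫ τ in Set.Ioi (0 : ℝ),
        ∫ y in {y : EuclideanSpace ℝ (Fin 2) | ‖y‖ ≤ R₀}, q * heatKernel2D D k y τ =
      (q / k) * (1 - Real.sqrt (k / D) * R₀ * besselK1 (Real.sqrt (k / D) * R₀)) := by
  set z := √(k / D) * R₀ with hz_def
  have hz : 0 < z := by positivity
  have hz_sq : ∀ τ, z ^ 2 / (4 * k * τ) = R₀ ^ 2 / (4 * D * τ) := by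
    intro τ
    rw [hz_def, mul_pow, sq_sqrt (by positivity)]
    field_simp
  have hreceiver : ∀ τ ∈ Ioi (0 : ℝ),
      ∫ y in {y : EuclideanSpace ℝ (Fin 2) | ‖y‖ ≤ R₀}, q * heatKernel2D D k y τ =
        q * (exp (-k * τ) - exp (-k * τ - z ^ 2 / (4 * k * τ))) := by
    intro τ hτ
    have hdisk : {y : EuclideanSpace ℝ (Fin 2) | ‖y‖ ≤ R₀} = Metric.closedBall 0 R₀ := by
      ext y; simp
    rw [hdisk, integral_const_mul, integral_closedBall_heatKernel2D hD.ne' (ne_of_gt hτ) hR₀.le,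
      hz_sq, sub_eq_add_neg (-k * τ), exp_add, neg_div]
    ring
  rw [setIntegral_congr_fun measurableSet_Ioi hreceiver, integral_const_mul,
    integral_sub (integrableOn_exp_mul_Ioi (neg_neg_of_pos hk) 0)
      (integrableOn_exp_neg_mul_sub_sq_div_Ioi hk z),
    integral_exp_mul_Ioi (neg_neg_of_pos hk), integral_exp_neg_mul_sub_sq_div_Ioi hk hz,
    mul_zero, exp_zero]
  field_simp

/-- For `q > 0`, `k > 0`, `D > 0` and `R₀ > 0`, the asymptotic channel response at a circular
receiver of radius `R₀` due to continuous emission at rate `q` from its own center is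
`∫₀^∞ ∫_{|y| ≤ R₀} q·C(y, τ) dy dτ = (q/k)·(1 − √(k/D)·R₀·K₁(√(k/D)·R₀))`. -/
theorem self_asymptotic_channel_response (q k D R₀ : ℝ)
    (hq : 0 < q) (hk : 0 < k) (hD : 0 < D) (hR₀ : 0 < R₀) :
    ∫ τ in Set.Ioi (0 : ℝ),
        ∫ y in {y : EuclideanSpace ℝ (Fin 2) | ‖y‖ ≤ R₀}, q * heatKernel2D D k y τ =
      (q / k) * (1 - Real.sqrt (k / D) * R₀ * besselK1 (Real.sqrt (k / D) * R₀)) :=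
  self_asymptotic_channel_response_general q k D R₀ hk hD hR₀
end

section
/- For every z > 0, the inequality 0 < z·K₁(z) < 1 holds, where K₁(z) = ∫₀^∞ exp(−z·cosh t)·cosh t dt. Consequently, for all q > 0, k > 0, D > 0 and R₀ > 0, the asymptotic self-channel response (q/k)·(1 − √(k/D)·R₀·K₁(√(k/D)·R₀)) is strictly between 0 and q/k. -/
open Real MeasureTheory

/-!
Since `sinh t < cosh t`, the integrand of `K₁(z)` is strictly dominated by
`exp (-z sinh t) cosh t`, whose integral over `(0, ∞)` is `1 / z` (substitute `u = sinh t`).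
Hence `0 < K₁(z) < 1 / z`, and the self-channel response is `q / k` times a number in `(0, 1)`.
-/

open Filter Set

namespace MeasureTheory

variable {α : Type*} [MeasurableSpace α] {μ : Measure α} {s : Set α} {f g : α → ℝ}

theorem setIntegral_pos_of_forall_pos (hs : MeasurableSet s) (hμs : μ s ≠ 0)
    (hf : IntegrableOn f s μ) (hpos : ∀ x ∈ s, 0 < f x) : 0 < ∫ x in s, f x ∂μ := by
  rw [setIntegral_pos_iff_support_of_nonneg_ae
    (ae_restrict_of_forall_mem hs fun x hx => (hpos x hx).le) hf,
    inter_eq_right.2 fun x hx => Function.mem_support.2 (hpos x hx).ne']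
  exact pos_iff_ne_zero.2 hμs

theorem setIntegral_lt_setIntegral_of_forall_lt (hs : MeasurableSet s) (hμs : μ s ≠ 0)
    (hf : IntegrableOn f s μ) (hg : IntegrableOn g s μ) (hlt : ∀ x ∈ s, f x < g x) :
    ∫ x in s, f x ∂μ < ∫ x in s, g x ∂μ := by
  have hpos : 0 < ∫ x in s, (g x - f x) ∂μ :=
    setIntegral_pos_of_forall_pos hs hμs (hg.sub hf) fun x hx => sub_pos.2 (hlt x hx)
  rw [integral_sub hg hf] at hpos
  linarith

end MeasureTheory

theorem Real.tendsto_sinh_atTop : Tendsto sinh atTop atTop :=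
  tendsto_atTop_mono' _ (eventually_ge_atTop 0 |>.mono fun _ hx => self_le_sinh_iff.2 hx)
    tendsto_id

section SinhIntegral

variable {z : ℝ}

theorem hasDerivAt_neg_exp_neg_mul_sinh_div (hz : z ≠ 0) (t : ℝ) :
    HasDerivAt (fun t => -exp (-z * sinh t) / z) (exp (-z * sinh t) * cosh t) t := by
  have h := (((hasDerivAt_sinh t).const_mul (-z)).exp.neg).div_const z
  exact h.congr_deriv (by field_simp)

theorem tendsto_neg_exp_neg_mul_sinh_div (hz : 0 < z) :
    Tendsto (fun t => -exp (-z * sinh t) / z) atTop (nhds 0) := by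
  have h := ((tendsto_exp_atBot.comp
    (tendsto_sinh_atTop.const_mul_atTop_of_neg (neg_neg_of_pos hz))).neg).div_const z
  simpa using h

theorem integrableOn_exp_neg_mul_sinh_mul_cosh (hz : 0 < z) :
    IntegrableOn (fun t => exp (-z * sinh t) * cosh t) (Ioi 0) :=
  integrableOn_Ioi_deriv_of_nonneg' (fun t _ => hasDerivAt_neg_exp_neg_mul_sinh_div hz.ne' t)
    (fun t _ => by positivity) (tendsto_neg_exp_neg_mul_sinh_div hz)

theorem integral_exp_neg_mul_sinh_mul_cosh (hz : 0 < z) :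
    ∫ t in Ioi (0 : ℝ), exp (-z * sinh t) * cosh t = z⁻¹ := by
  rw [integral_Ioi_of_hasDerivAt_of_nonneg'
    (fun t _ => hasDerivAt_neg_exp_neg_mul_sinh_div hz.ne' t) (fun t _ => by positivity)
    (tendsto_neg_exp_neg_mul_sinh_div hz)]
  simp [neg_div, one_div]

end SinhIntegral

section BesselK1

variable {z : ℝ}

theorem exp_neg_mul_cosh_mul_cosh_lt (hz : 0 < z) (t : ℝ) :
    exp (-z * cosh t) * cosh t < exp (-z * sinh t) * cosh t := by
  have hexp : exp (-z * cosh t) < exp (-z * sinh t) :=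
    exp_lt_exp.2 (by nlinarith [sinh_lt_cosh t])
  exact mul_lt_mul_of_pos_right hexp (cosh_pos t)

theorem integrableOn_besselK1_integrand (hz : 0 < z) :
    IntegrableOn (fun t => exp (-z * cosh t) * cosh t) (Ioi 0) := by
  refine (integrableOn_exp_neg_mul_sinh_mul_cosh hz).mono' (by fun_prop : Continuous fun t => exp (-z * cosh t) * cosh t).aestronglyMeasurable ?_
  refine ae_of_all _ fun t => ?_
  rw [norm_of_nonneg (by positivity)]
  exact (exp_neg_mul_cosh_mul_cosh_lt hz t).le

theorem besselK1_pos (hz : 0 < z) : 0 < besselK1 z :=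
  setIntegral_pos_of_forall_pos measurableSet_Ioi (by simp)
    (integrableOn_besselK1_integrand hz) fun t _ => by positivity

theorem mul_besselK1_lt_one (hz : 0 < z) : z * besselK1 z < 1 := by
  have hlt : besselK1 z < z⁻¹ := by
    rw [← integral_exp_neg_mul_sinh_mul_cosh hz]
    exact setIntegral_lt_setIntegral_of_forall_lt measurableSet_Ioi (by simp)
      (integrableOn_besselK1_integrand hz) (integrableOn_exp_neg_mul_sinh_mul_cosh hz)
      fun t _ => exp_neg_mul_cosh_mul_cosh_lt hz t
  calc z * besselK1 z < z * z⁻¹ := mul_lt_mul_of_pos_left hlt hz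
    _ = 1 := mul_inv_cancel₀ hz.ne'

end BesselK1

/-- For every `z > 0`, `0 < z·K₁(z) < 1`; consequently, for all `q > 0`, `k > 0`, `D > 0` and
`R₀ > 0`, the asymptotic self-channel response `(q/k)·(1 − √(k/D)·R₀·K₁(√(k/D)·R₀))` is
strictly between `0` and `q/k`. -/
theorem self_response_bounds :
    (∀ z : ℝ, 0 < z →
      0 < z * besselK1 z ∧ z * besselK1 z < 1) ∧
    (∀ q k D R₀ : ℝ, 0 < q → 0 < k → 0 < D → 0 < R₀ →
      0 < (q / k) * (1 - Real.sqrt (k / D) * R₀ * besselK1 (Real.sqrt (k / D) * R₀)) ∧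
      (q / k) * (1 - Real.sqrt (k / D) * R₀ * besselK1 (Real.sqrt (k / D) * R₀)) < q / k) := by
  have hbounds : ∀ z : ℝ, 0 < z → 0 < z * besselK1 z ∧ z * besselK1 z < 1 :=
    fun z hz => ⟨mul_pos hz (besselK1_pos hz), mul_besselK1_lt_one hz⟩
  refine ⟨hbounds, fun q k D R₀ hq hk hD hR₀ => ?_⟩
  obtain ⟨hlow, hhigh⟩ := hbounds (√(k / D) * R₀) (by positivity)
  have hqk : 0 < q / k := div_pos hq hk
  exact ⟨mul_pos hqk (by linarith), mul_lt_of_lt_one_right hqk (by linarith)⟩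
end
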